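/- Let (x_k) be the sequence in ℓ¹ defined by x_{2k-1} = 0 and x_{2k} = e_k (the k-th standard basis vector). Then the set of weak* cluster points of (x_k) in (ℓ¹)** = (ℓ∞)* has distance 0 to ℓ¹, the non-symmetrized Hausdorff distance d̂(clust(x_k), ℓ¹) equals 1, and the diameter δ(x_k) of the cluster set equals 2. -/

import Mathlib

open Filter Topology NormedSpace

/-- The set of weak* cluster points in the bidual of a sequence `(x k)` in `X`. -/
def weakStarClusterPoints {X : Type*} [NormedAddCommGroup X] [NormedSpace ℝ X]
    (x : ℕ → X) : Set (StrongDual ℝ (StrongDual ℝ X)) :=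
  {y | MapClusterPt (StrongDual.toWeakDual y) atTop
        fun k => StrongDual.toWeakDual (inclusionInDoubleDual ℝ X (x k))}

/-- `d̂(A, X) = sup_{a ∈ A} dist (a, X)` and `d(A, X) = inf_{a ∈ A} dist (a, X)`. -/
noncomputable def dHat {X : Type*} [NormedAddCommGroup X] [NormedSpace ℝ X]
    (A : Set (StrongDual ℝ (StrongDual ℝ X))) : ℝ :=
  sSup ((fun y => Metric.infDist y (Set.range fun v : X => inclusionInDoubleDual ℝ X v)) '' A)

noncomputable def dLow {X : Type*} [NormedAddCommGroup X] [NormedSpace ℝ X]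
    (A : Set (StrongDual ℝ (StrongDual ℝ X))) : ℝ :=
  sInf ((fun y => Metric.infDist y (Set.range fun v : X => inclusionInDoubleDual ℝ X v)) '' A)

/-- The sequence `0, e_0, 0, e_1, 0, e_2, …` in `ℓ¹` (`0`-indexed version of
`x_{2k-1} = 0`, `x_{2k} = e_k`). -/
noncomputable def zeroBasisSeq : ℕ → lp (fun _ : ℕ => ℝ) 1 := fun k =>
  if k % 2 = 0 then 0 else lp.single 1 (k / 2) (1 : ℝ)

/-! All terms of the sequence lie in the unit ball of `ℓ¹`, which is weak* closed in the bidual,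
so every cluster point has norm at most `1`: its distance to `ℓ¹` is at most `1` and the cluster
set has diameter at most `2`. The zero terms make `0` a cluster point. By Banach–Alaoglu the basis
vectors `e_{2k}` and `e_{2k+1}` have weak* cluster points `y₀`, `y₁`. Both take the value `1` on
every tail functional `x ↦ ∑_{n ≥ m} x n`; these functionals have norm `1` and tend to `0` on each
fixed `x ∈ ℓ¹`, so `‖y₀ - x‖ ≥ 1`. The alternating functional `x ↦ ∑ (-1)ⁿ x n` takes the values
`1` and `-1` on `y₀` and `y₁`, so `‖y₀ - y₁‖ ≥ 2`. -/

open Metric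

section WeakStarClusterPoints

variable {X : Type*} [NormedAddCommGroup X] [NormedSpace ℝ X]

theorem toWeakDual_inclusionInDoubleDual_mem_closedBall {v : X} {C : ℝ} (hv : ‖v‖ ≤ C) :
    StrongDual.toWeakDual (inclusionInDoubleDual ℝ X v) ∈
      WeakDual.toStrongDual ⁻¹' closedBall (0 : StrongDual ℝ (StrongDual ℝ X)) C :=
  (mem_closedBall_zero_iff (E := StrongDual ℝ (StrongDual ℝ X))).2 <|
    (double_dual_bound ℝ X v).trans hv

theorem norm_le_of_mem_weakStarClusterPoints {x : ℕ → X} {C : ℝ} (hx : ∀ k, ‖x k‖ ≤ C)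
    {y : StrongDual ℝ (StrongDual ℝ X)} (hy : y ∈ weakStarClusterPoints x) : ‖y‖ ≤ C := by
  simpa using (WeakDual.isClosed_closedBall 0 C).mem_of_mapClusterPt hy
    (Eventually.of_forall fun k => toWeakDual_inclusionInDoubleDual_mem_closedBall (hx k))

theorem weakStarClusterPoints_nonempty {x : ℕ → X} {C : ℝ} (hx : ∀ k, ‖x k‖ ≤ C) :
    (weakStarClusterPoints x).Nonempty := by
  obtain ⟨y, -, hy⟩ := (WeakDual.isCompact_closedBall 0 C).exists_mapClusterPt (f := atTop)
    (le_principal_iff.2 <| mem_map.2 <| univ_mem' fun k =>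
      toWeakDual_inclusionInDoubleDual_mem_closedBall (hx k))
  exact ⟨WeakDual.toStrongDual y, hy⟩

theorem weakStarClusterPoints_comp_subset (x : ℕ → X) {φ : ℕ → ℕ} (hφ : Tendsto φ atTop atTop) :
    weakStarClusterPoints (x ∘ φ) ⊆ weakStarClusterPoints x :=
  fun _ hy => hy.of_comp hφ

theorem inclusionInDoubleDual_mem_weakStarClusterPoints_const (v : X) :
    inclusionInDoubleDual ℝ X v ∈ weakStarClusterPoints fun _ : ℕ => v :=
  tendsto_const_nhds.mapClusterPt

theorem apply_eq_of_mem_weakStarClusterPoints {x : ℕ → X} {y : StrongDual ℝ (StrongDual ℝ X)}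
    (hy : y ∈ weakStarClusterPoints x) {g : StrongDual ℝ X} {c : ℝ}
    (hg : ∀ᶠ k in atTop, g (x k) = c) : y g = c :=
  isClosed_singleton.mem_of_mapClusterPt
    (hy.continuousAt_comp (f := fun z : WeakDual ℝ (StrongDual ℝ X) => z g)
      (WeakDual.eval_continuous g).continuousAt) hg

theorem infDist_range_inclusionInDoubleDual_le_norm (y : StrongDual ℝ (StrongDual ℝ X)) :
    infDist y (Set.range fun v : X => inclusionInDoubleDual ℝ X v) ≤ ‖y‖ :=
  (infDist_le_dist_of_mem (Set.mem_range.2 ⟨0, map_zero (inclusionInDoubleDual ℝ X)⟩)).trans_eq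
    (dist_zero_right y)

theorem one_le_infDist_range_inclusionInDoubleDual {y : StrongDual ℝ (StrongDual ℝ X)}
    {g : ℕ → StrongDual ℝ X} (hg_norm : ∀ m, ‖g m‖ ≤ 1) (hy : ∀ m, y (g m) = 1)
    (hg_null : ∀ v, Tendsto (fun m => g m v) atTop (𝓝 0)) :
    1 ≤ infDist y (Set.range fun v : X => inclusionInDoubleDual ℝ X v) := by
  refine (le_infDist (Set.range_nonempty _)).2 ?_
  rintro _ ⟨v, rfl⟩
  have hlim : Tendsto (fun m => ‖(y - inclusionInDoubleDual ℝ X v) (g m)‖) atTop (𝓝 1) := by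
    simpa [hy] using ((hg_null v).const_sub 1).norm
  refine le_of_tendsto' hlim fun m => ?_
  rw [dist_eq_norm y]
  simpa using (y - inclusionInDoubleDual ℝ X v).le_opNorm_of_le (hg_norm m)

end WeakStarClusterPoints

section LpOne

local notation "ℓ¹" => lp (fun _ : ℕ => ℝ) 1

theorem hasSum_norm_lpOne (x : ℓ¹) : HasSum (fun n => ‖x n‖) ‖x‖ := by
  simpa using lp.hasSum_norm (p := 1) (by norm_num) x

variable {s : ℕ → ℝ} {C : ℝ}

theorem summable_mul_lpOne (hs : ∀ n, ‖s n‖ ≤ C) (x : ℓ¹) : Summable fun n => s n * x n :=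
  .of_norm_bounded ((hasSum_norm_lpOne x).summable.mul_left C) fun n => by
    rw [norm_mul]
    exact mul_le_mul_of_nonneg_right (hs n) (norm_nonneg _)

noncomputable def lpOnePairing (s : ℕ → ℝ) (hs : ∀ n, ‖s n‖ ≤ C) : StrongDual ℝ ℓ¹ :=
  LinearMap.mkContinuous
    { toFun := fun x => ∑' n, s n * x n
      map_add' := fun x y => by
        simp only [lp.coeFn_add, Pi.add_apply, mul_add]
        exact (summable_mul_lpOne hs x).tsum_add (summable_mul_lpOne hs y)
      map_smul' := fun c x => by
        simp only [lp.coeFn_smul, Pi.smul_apply, smul_eq_mul, RingHom.id_apply, ← tsum_mul_left]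
        exact tsum_congr fun n => by ring }
    C fun x => by
      calc ‖∑' n, s n * x n‖ ≤ ∑' n, ‖s n * x n‖ :=
            norm_tsum_le_tsum_norm (summable_mul_lpOne hs x).norm
        _ ≤ ∑' n, C * ‖x n‖ :=
            (summable_mul_lpOne hs x).norm.tsum_le_tsum
              (fun n => by rw [norm_mul]; exact mul_le_mul_of_nonneg_right (hs n) (norm_nonneg _))
              ((hasSum_norm_lpOne x).summable.mul_left C)
        _ = C * ‖x‖ := by rw [tsum_mul_left, (hasSum_norm_lpOne x).tsum_eq]

theorem lpOnePairing_apply (hs : ∀ n, ‖s n‖ ≤ C) (x : ℓ¹) :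
    lpOnePairing s hs x = ∑' n, s n * x n := rfl

theorem norm_lpOnePairing_le (hs : ∀ n, ‖s n‖ ≤ C) : ‖lpOnePairing s hs‖ ≤ C :=
  LinearMap.mkContinuous_norm_le _ ((norm_nonneg _).trans (hs 0)) _

theorem lpOnePairing_single (hs : ∀ n, ‖s n‖ ≤ C) (k : ℕ) (a : ℝ) :
    lpOnePairing s hs (lp.single 1 k a) = s k * a := by
  rw [lpOnePairing_apply, tsum_eq_single k fun n hn => by simp [lp.single_apply, hn]]
  simp

noncomputable def lpOneTail (m : ℕ) : StrongDual ℝ ℓ¹ :=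
  lpOnePairing (C := 1) (fun n => if m ≤ n then 1 else 0) fun n => by split_ifs <;> simp

noncomputable def lpOneAlternating : StrongDual ℝ ℓ¹ :=
  lpOnePairing (C := 1) (fun n => (-1) ^ n) fun n => by simp

theorem norm_lpOneTail_le_one (m : ℕ) : ‖lpOneTail m‖ ≤ 1 :=
  norm_lpOnePairing_le _

theorem norm_lpOneAlternating_le_one : ‖lpOneAlternating‖ ≤ 1 :=
  norm_lpOnePairing_le _

theorem lpOneTail_single {m k : ℕ} (hmk : m ≤ k) : lpOneTail m (lp.single 1 k 1) = 1 := by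
  simp [lpOneTail, lpOnePairing_single, hmk]

theorem lpOneAlternating_single (k : ℕ) : lpOneAlternating (lp.single 1 k 1) = (-1) ^ k := by
  simp [lpOneAlternating, lpOnePairing_single]

theorem tendsto_lpOneTail_apply (x : ℓ¹) : Tendsto (fun m => lpOneTail m x) atTop (𝓝 0) := by
  simpa [lpOneTail, lpOnePairing_apply] using
    tendsto_tsum_of_dominated_convergence (hasSum_norm_lpOne x).summable
    (f := fun m n => (if m ≤ n then (1 : ℝ) else 0) * x n) (g := 0)
    (fun n => tendsto_const_nhds.congr' <|
      (eventually_gt_atTop n).mono fun m hm => by simp [not_le.2 hm])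
    (Eventually.of_forall fun m n => by split_ifs <;> simp)

end LpOne

theorem zeroBasisSeq_two_mul (k : ℕ) : zeroBasisSeq (2 * k) = 0 := by
  simp [zeroBasisSeq]

theorem zeroBasisSeq_two_mul_add_one (k : ℕ) : zeroBasisSeq (2 * k + 1) = lp.single 1 k 1 := by
  simp [zeroBasisSeq, Nat.add_mod, Nat.add_div]

theorem norm_zeroBasisSeq_le_one (k : ℕ) : ‖zeroBasisSeq k‖ ≤ 1 := by
  unfold zeroBasisSeq
  split_ifs <;> simp [lp.norm_single]

theorem zero_mem_weakStarClusterPoints_zeroBasisSeq :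
    0 ∈ weakStarClusterPoints zeroBasisSeq := by
  have hsub := weakStarClusterPoints_comp_subset zeroBasisSeq
    (φ := (2 * ·)) (strictMono_mul_left_of_pos two_pos).tendsto_atTop
  rw [show zeroBasisSeq ∘ (2 * ·) = fun _ => 0 from funext zeroBasisSeq_two_mul] at hsub
  simpa using hsub (inclusionInDoubleDual_mem_weakStarClusterPoints_const 0)

theorem exists_mem_weakStarClusterPoints_zeroBasisSeq (r : ℕ) :
    ∃ y ∈ weakStarClusterPoints zeroBasisSeq,
      (∀ m, y (lpOneTail m) = 1) ∧ y lpOneAlternating = (-1) ^ r := by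
  let φ : ℕ → ℕ := fun k => 2 * (2 * k + r) + 1
  have hφ : StrictMono φ := fun a b h => by simp only [φ]; omega
  have hsub : zeroBasisSeq ∘ φ = fun k => lp.single 1 (2 * k + r) 1 :=
    funext fun k => zeroBasisSeq_two_mul_add_one _
  obtain ⟨y, hy⟩ := weakStarClusterPoints_nonempty (x := zeroBasisSeq ∘ φ) fun k =>
    norm_zeroBasisSeq_le_one _
  refine ⟨y, weakStarClusterPoints_comp_subset _ hφ.tendsto_atTop hy, fun m => ?_, ?_⟩ <;>
    rw [hsub] at hy <;> refine apply_eq_of_mem_weakStarClusterPoints hy ?_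
  · exact (eventually_ge_atTop m).mono fun k hk => lpOneTail_single (by omega)
  · exact Eventually.of_forall fun k => by simp [lpOneAlternating_single, pow_add, pow_mul]

/-- For the sequence `x_{2k-1} = 0`, `x_{2k} = e_k` in `ℓ¹`:
`d(clust(x_k), ℓ¹) = 0`, `d̂(clust(x_k), ℓ¹) = 1` and `δ(x_k) = diam (clust (x_k)) = 2`. -/
theorem statement5 :
    dLow (weakStarClusterPoints zeroBasisSeq) = 0 ∧
    dHat (weakStarClusterPoints zeroBasisSeq) = 1 ∧
    Metric.diam (weakStarClusterPoints zeroBasisSeq) = 2 := by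
  have hnorm : ∀ y ∈ weakStarClusterPoints zeroBasisSeq, ‖y‖ ≤ 1 := fun _ =>
    norm_le_of_mem_weakStarClusterPoints norm_zeroBasisSeq_le_one
  have hdist_le : ∀ y ∈ weakStarClusterPoints zeroBasisSeq,
      infDist y (Set.range fun v => inclusionInDoubleDual ℝ _ v) ≤ 1 := fun y hy =>
    (infDist_range_inclusionInDoubleDual_le_norm y).trans (hnorm y hy)
  obtain ⟨y₀, hy₀, htail₀, halt₀⟩ := exists_mem_weakStarClusterPoints_zeroBasisSeq 0
  obtain ⟨y₁, hy₁, -, halt₁⟩ := exists_mem_weakStarClusterPoints_zeroBasisSeq 1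
  refine ⟨?_, ?_, ?_⟩
  · refine IsLeast.csInf_eq ⟨⟨0, zero_mem_weakStarClusterPoints_zeroBasisSeq,
      infDist_zero_of_mem ⟨0, map_zero _⟩⟩, ?_⟩
    rintro _ ⟨y, -, rfl⟩
    exact infDist_nonneg
  · refine IsGreatest.csSup_eq ⟨⟨y₀, hy₀, (hdist_le y₀ hy₀).antisymm ?_⟩, ?_⟩
    · exact one_le_infDist_range_inclusionInDoubleDual norm_lpOneTail_le_one htail₀
        tendsto_lpOneTail_apply
    · rintro _ ⟨y, hy, rfl⟩
      exact hdist_le y hy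
  · have hbdd : Bornology.IsBounded (weakStarClusterPoints zeroBasisSeq) :=
      isBounded_iff_forall_norm_le.2 ⟨1, hnorm⟩
    refine (diam_le_of_forall_dist_le zero_le_two fun a ha b hb => ?_).antisymm ?_
    · rw [dist_eq_norm a]
      exact (norm_sub_le a b).trans (by linarith [hnorm a ha, hnorm b hb])
    · calc (2 : ℝ) = ‖(y₀ - y₁) lpOneAlternating‖ := by simp [halt₀, halt₁]; norm_num
        _ ≤ ‖y₀ - y₁‖ := by simpa using (y₀ - y₁).le_opNorm_of_le norm_lpOneAlternating_le_one
        _ = dist y₀ y₁ := (dist_eq_norm y₀ y₁).symm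
        _ ≤ diam (weakStarClusterPoints zeroBasisSeq) := dist_le_diam_of_mem hbdd hy₀ hy₁
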